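/- arXiv:1112.1455 — 2 statements merged into one kernel-verified Lean document; each statement's English description precedes it below -/
import Mathlib

section
/- Let A be a C*-algebra, B a hereditary C*-subalgebra of A, and x a positive element of B. Then x is finite in the sense of Cuntz and Pedersen as an element of B if and only if x is finite in the sense of Cuntz and Pedersen as an element of A. In symbols, 𝓕^B = 𝓕^A ∩ B, where 𝓕^A denotes the set of finite positive elements of A. -/
/-!
If `∑ star z_k * z_k = x ∈ B` and `∑ z_k * star z_k = y ≤ x`, then `star z_k * z_k` and
`z_k * star z_k` lie below `x`, hence in `B` by heredity. An element `z` with `star z * z` and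
`z * star z` in `B` lies in `B`: it is the norm limit of `c * z * d`, where `c` and `d` are
functional-calculus cut-offs of `z * star z` and `star z * z` (so `c, d ∈ B`), and `B * A * B ⊆ B`
because, by polarization, this reduces to `star b * a * b ∈ B`, which holds for `a ≥ 0` since
`star b * a * b ≤ ‖a‖ • (star b * b)`, and positive elements span `A`.
-/

open Filter Topology

/-- A *hereditary C*-subalgebra* of a C*-algebra `A`: a norm-closed star-subalgebra `B ⊆ A`
such that whenever `a ∈ A` and `b ∈ B` satisfy `0 ≤ a ≤ b`, then `a ∈ B`. -/
def IsHereditarySubalgebra {A : Type*} [NonUnitalCStarAlgebra A] [PartialOrder A]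
    [StarOrderedRing A] (B : NonUnitalStarSubalgebra ℂ A) : Prop :=
  IsClosed (B : Set A) ∧ ∀ ⦃a b : A⦄, b ∈ B → 0 ≤ a → a ≤ b → a ∈ B

/-- An element `x` is *finite in the sense of Cuntz and Pedersen* relative to the subset `S`
(`S = Set.univ` gives finiteness in `A`; `S = B` gives finiteness in the C*-algebra `B`):
for every sequence `(z k)` in `S` such that `∑ star (z k) * z k` converges in norm to `x` and
`∑ z k * star (z k)` converges in norm to `y` with `y ≤ x`, one has `y = x`. -/
def CPFiniteIn {A : Type*} [NonUnitalRing A] [StarRing A] [TopologicalSpace A]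
    [PartialOrder A] (S : Set A) (x : A) : Prop :=
  ∀ z : ℕ → A, (∀ k, z k ∈ S) → ∀ y : A,
    Tendsto (fun n => ∑ k ∈ Finset.range n, star (z k) * z k) atTop (nhds x) →
    Tendsto (fun n => ∑ k ∈ Finset.range n, z k * star (z k)) atTop (nhds y) →
    y ≤ x → y = x

lemma CPFiniteIn.anti {A : Type*} [NonUnitalRing A] [StarRing A] [TopologicalSpace A]
    [PartialOrder A] {S T : Set A} {x : A} (h : CPFiniteIn T x) (hST : S ⊆ T) :
    CPFiniteIn S x :=
  fun z hz => h z fun k => hST (hz k)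

lemma le_of_tendsto_sum_range {α : Type*} [AddCommMonoid α] [PartialOrder α]
    [IsOrderedAddMonoid α] [TopologicalSpace α] [ClosedIciTopology α] {f : ℕ → α} {x : α}
    (hf : ∀ k, 0 ≤ f k) (h : Tendsto (fun n => ∑ k ∈ Finset.range n, f k) atTop (𝓝 x))
    (k : ℕ) : f k ≤ x :=
  ge_of_tendsto h <| (eventually_gt_atTop k).mono fun _ hn =>
    Finset.single_le_sum (fun j _ => hf j) (Finset.mem_range.2 hn)

lemma star_mul_mul_polarization {A : Type*} [NonUnitalRing A] [StarRing A] [Module ℂ A]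
    [StarModule ℂ A] [IsScalarTower ℂ A A] [SMulCommClass ℂ A A] (x y c : A) :
    (4 : ℂ) • (star x * c * y) = star (x + y) * c * (x + y) - star (x - y) * c * (x - y)
      - Complex.I • (star (x + Complex.I • y) * c * (x + Complex.I • y))
      + Complex.I • (star (x - Complex.I • y) * c * (x - Complex.I • y)) := by
  simp only [star_add, star_sub, star_smul, add_mul, mul_add, sub_mul, mul_sub, smul_mul_assoc,
    mul_smul_comm, Complex.star_def, Complex.conj_I]
  match_scalars <;> ring_nf <;> norm_num [Complex.I_sq]

section CStarAlgebra

variable {A : Type*} [NonUnitalCStarAlgebra A]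

lemma sub_cfcₙ_mul_mul_star_self (z : A) {f : ℝ → ℝ} (hf : Continuous f) (hf₀ : f 0 = 0) :
    (z - cfcₙ f (z * star z) * z) * star (z - cfcₙ f (z * star z) * z) =
      cfcₙ (fun t => t * (1 - f t) ^ 2) (z * star z) := by
  have hexp : (fun t : ℝ => t * (1 - f t) ^ 2) =
      fun t => t - f t * t - t * f t + f t * t * f t := by
    ext t; ring
  rw [hexp, cfcₙ_add .., cfcₙ_sub .., cfcₙ_sub .., cfcₙ_mul .., cfcₙ_mul .., cfcₙ_mul ..,
    cfcₙ_mul .., cfcₙ_id' ℝ (z * star z), star_sub, star_mul,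
    IsSelfAdjoint.cfcₙ.star_eq]
  noncomm_ring

variable [PartialOrder A] [StarOrderedRing A]

lemma norm_cfcₙ_min_div_le_one {a : A} (ha : 0 ≤ a) {r : ℝ} (hr : 0 ≤ r) :
    ‖cfcₙ (fun t : ℝ => min (t / r) 1) a‖ ≤ 1 := by
  refine norm_cfcₙ_le fun t ht => ?_
  have ht₀ : 0 ≤ t := quasispectrum_nonneg_of_nonneg a ha t ht
  rw [Real.norm_eq_abs, abs_le]
  exact ⟨by linarith [le_min (div_nonneg ht₀ hr) zero_le_one], min_le_right _ _⟩

-- By the C⋆-identity, `‖z - c * z‖²` is the supremum of `t (1 - min (t / ε²) 1)²` over the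
-- spectrum of `z * star z`, and this function is bounded by `ε²` on `[0, ∞)`.
lemma norm_sub_cfcₙ_mul_le (z : A) {ε : ℝ} (hε : 0 < ε) :
    ‖z - cfcₙ (fun t : ℝ => min (t / ε ^ 2) 1) (z * star z) * z‖ ≤ ε := by
  have hbound : ∀ t ∈ quasispectrum ℝ (z * star z),
      ‖t * (1 - min (t / ε ^ 2) 1) ^ 2‖ ≤ ε ^ 2 := by
    intro t ht
    have ht₀ : 0 ≤ t := quasispectrum_nonneg_of_nonneg _ (mul_star_self_nonneg z) t ht
    rw [Real.norm_eq_abs, abs_of_nonneg (by positivity)]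
    rcases le_or_gt t (ε ^ 2) with hle | hgt
    · have h1 : t / ε ^ 2 ≤ 1 := (div_le_one (by positivity)).2 hle
      rw [min_eq_left h1]
      calc t * (1 - t / ε ^ 2) ^ 2 ≤ t * 1 :=
            mul_le_mul_of_nonneg_left
              (pow_le_one₀ (by linarith) (by linarith [div_nonneg ht₀ (sq_nonneg ε)])) ht₀
        _ ≤ ε ^ 2 := by linarith
    · rw [min_eq_right ((one_le_div (by positivity)).2 hgt.le)]
      simp; positivity
  refine (pow_le_pow_iff_left₀ (norm_nonneg _) hε.le two_ne_zero).1 ?_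
  rw [sq, ← CStarRing.norm_self_mul_star, sub_cfcₙ_mul_mul_star_self z (by fun_prop) (by simp)]
  exact norm_cfcₙ_le hbound

lemma norm_sub_mul_cfcₙ_le (z : A) {ε : ℝ} (hε : 0 < ε) :
    ‖z - z * cfcₙ (fun t : ℝ => min (t / ε ^ 2) 1) (star z * z)‖ ≤ ε := by
  have h := norm_sub_cfcₙ_mul_le (star z) hε
  rwa [star_star, ← norm_star, star_sub, star_mul, star_star,
    IsSelfAdjoint.cfcₙ.star_eq] at h

end CStarAlgebra

namespace IsHereditarySubalgebra

variable {A : Type*} [NonUnitalCStarAlgebra A] [PartialOrder A] [StarOrderedRing A]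
  {B : NonUnitalStarSubalgebra ℂ A}

lemma star_mul_mul_mem (hB : IsHereditarySubalgebra B) {b : A} (hb : b ∈ B) (c : A) :
    star b * c * b ∈ B := by
  have hc : c ∈ Submodule.span ℂ {a : A | 0 ≤ a} :=
    (CStarAlgebra.span_nonneg (A := A)) ▸ Submodule.mem_top
  induction hc using Submodule.span_induction with
  | mem d hd =>
    have hbb : ‖d‖ • (star b * b) ∈ B :=
      (algebraMap_smul ℂ ‖d‖ (star b * b)) ▸ SMulMemClass.smul_mem _ (mul_mem (star_mem hb) hb)
    exact hB.2 hbb (star_left_conjugate_nonneg hd b)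
      (CStarAlgebra.star_left_conjugate_le_norm_smul hd.isSelfAdjoint)
  | zero => simp
  | add x y _ _ hx hy => simpa only [mul_add, add_mul] using add_mem hx hy
  | smul r x _ hx => simpa only [mul_smul_comm, smul_mul_assoc] using SMulMemClass.smul_mem r hx

lemma mul_mul_mem (hB : IsHereditarySubalgebra B) {b b' : A} (hb : b ∈ B) (hb' : b' ∈ B)
    (c : A) : b * c * b' ∈ B := by
  have h4 := star_mul_mul_polarization (star b) b' c
  rw [star_star] at h4
  have hmem : (4 : ℂ) • (b * c * b') ∈ B := by
    have hb₀ : star b ∈ B := star_mem hb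
    have hIb' : Complex.I • b' ∈ B := SMulMemClass.smul_mem _ hb'
    rw [h4]
    exact add_mem (sub_mem (sub_mem (hB.star_mul_mul_mem (add_mem hb₀ hb') c)
      (hB.star_mul_mul_mem (sub_mem hb₀ hb') c))
      (SMulMemClass.smul_mem _ (hB.star_mul_mul_mem (add_mem hb₀ hIb') c)))
      (SMulMemClass.smul_mem _ (hB.star_mul_mul_mem (sub_mem hb₀ hIb') c))
  simpa using SMulMemClass.smul_mem (4⁻¹ : ℂ) hmem

lemma mem_of_star_mul_self_mem (hB : IsHereditarySubalgebra B) {z : A}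
    (h₁ : star z * z ∈ B) (h₂ : z * star z ∈ B) : z ∈ B := by
  rw [← SetLike.mem_coe, ← hB.1.closure_eq, Metric.mem_closure_iff]
  intro ε hε
  set c := cfcₙ (fun t : ℝ => min (t / (ε / 3) ^ 2) 1) (z * star z)
  set d := cfcₙ (fun t : ℝ => min (t / (ε / 3) ^ 2) 1) (star z * z)
  have hc : ‖c‖ ≤ 1 := norm_cfcₙ_min_div_le_one (mul_star_self_nonneg z) (sq_nonneg _)
  refine ⟨c * z * d, hB.mul_mul_mem (cfcₙ_mem (hs := hB.1) _ h₂) (cfcₙ_mem (hs := hB.1) _ h₁) z,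
    ?_⟩
  calc dist z (c * z * d) = ‖(z - c * z) + c * (z - z * d)‖ := by
        rw [dist_eq_norm]; congr 1; noncomm_ring
    _ ≤ ‖z - c * z‖ + ‖c‖ * ‖z - z * d‖ :=
        (norm_add_le _ _).trans (by gcongr; exact norm_mul_le _ _)
    _ ≤ ε / 3 + 1 * (ε / 3) := by
        gcongr
        · exact norm_sub_cfcₙ_mul_le z (by positivity)
        · exact norm_sub_mul_cfcₙ_le z (by positivity)
    _ < ε := by linarith

end IsHereditarySubalgebra

theorem cpFinite_hereditary_iff_general
    {A : Type*} [NonUnitalCStarAlgebra A] [PartialOrder A] [StarOrderedRing A]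
    (B : NonUnitalStarSubalgebra ℂ A) (hB : IsHereditarySubalgebra B)
    (x : A) (hx : x ∈ B) :
    CPFiniteIn (B : Set A) x ↔ CPFiniteIn (Set.univ : Set A) x := by
  refine ⟨fun h z _ y hzx hzy hyx => h z (fun k => ?_) y hzx hzy hyx,
    fun h => h.anti (Set.subset_univ _)⟩
  have hx_ge : star (z k) * z k ≤ x :=
    le_of_tendsto_sum_range (fun _ => star_mul_self_nonneg _) hzx k
  have hy_ge : z k * star (z k) ≤ y :=
    le_of_tendsto_sum_range (fun _ => mul_star_self_nonneg _) hzy k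
  exact hB.mem_of_star_mul_self_mem (hB.2 hx (star_mul_self_nonneg _) hx_ge)
    (hB.2 hx (mul_star_self_nonneg _) (hy_ge.trans hyx))

/-- For a hereditary C*-subalgebra `B` of a C*-algebra `A` and a positive element `x ∈ B`,
`x` is finite (in the sense of Cuntz and Pedersen) in `B` if and only if it is finite in `A`;
in symbols, `𝓕^B = 𝓕^A ∩ B`. -/
theorem cpFinite_hereditary_iff
    {A : Type*} [NonUnitalCStarAlgebra A] [PartialOrder A] [StarOrderedRing A]
    (B : NonUnitalStarSubalgebra ℂ A) (hB : IsHereditarySubalgebra B)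
    (x : A) (hx : x ∈ B) (hx' : 0 ≤ x) :
    CPFiniteIn (B : Set A) x ↔ CPFiniteIn (Set.univ : Set A) x :=
  cpFinite_hereditary_iff_general B hB x hx
end

section
/- For a C*-algebra A, the following are equivalent: (1) A is semi-finite, i.e. every nonzero positive element of A dominates a nonzero finite positive element; (2) every nonzero hereditary C*-subalgebra of A contains a nonzero finite hereditary C*-subalgebra, i.e. a nonzero hereditary C*-subalgebra C of A all of whose positive elements are finite in A. -/
open Filter Topology

/-- An element `x` of a C*-algebra `A` is *finite in the sense of Cuntz and Pedersen*:
for every sequence `(z k)` in `A` such that `∑ star (z k) * z k` converges in norm to `x` and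
`∑ z k * star (z k)` converges in norm to `y` with `y ≤ x`, one has `y = x`. -/
def CPFinite {A : Type*} [NonUnitalRing A] [StarRing A] [TopologicalSpace A]
    [PartialOrder A] (x : A) : Prop :=
  ∀ z : ℕ → A, ∀ y : A,
    Tendsto (fun n => ∑ k ∈ Finset.range n, star (z k) * z k) atTop (nhds x) →
    Tendsto (fun n => ∑ k ∈ Finset.range n, z k * star (z k)) atTop (nhds y) →
    y ≤ x → y = x

/-!
Given a nonzero positive `p`, put `ε = ‖p‖ / 2` and `e = min (p / ε) 1`. The subalgebra
`{z | e z = z = z e}` is hereditary, is nonzero (it contains `(p - ε)₊`), lies in every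
hereditary subalgebra containing `p` (because `e² ≤ ε⁻¹ p`), and each of its positive
elements satisfies `c = e c e ≤ ‖c‖ e² ≤ μ p`. Cuntz–Pedersen finiteness passes to positive
multiples and to smaller elements, so a finite `y ≤ x` makes this subalgebra built from `y`
finite, and conversely a nonzero finite hereditary subalgebra of the one built from `x`
yields a finite `c ≤ μ x`.
-/

open Finset

section

variable {A : Type*} [NonUnitalCStarAlgebra A]

/-- For a projection `e` this is the corner `e A e`. -/
def cornerSubalgebra (e : A) (he : IsSelfAdjoint e) : NonUnitalStarSubalgebra ℂ A where
  carrier := {z | e * z = z ∧ z * e = z}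
  add_mem' ha hb := ⟨by rw [mul_add, ha.1, hb.1], by rw [add_mul, ha.2, hb.2]⟩
  zero_mem' := ⟨mul_zero e, zero_mul e⟩
  mul_mem' ha hb := ⟨by rw [← mul_assoc, ha.1], by rw [mul_assoc, hb.2]⟩
  smul_mem' c _ ha := ⟨by rw [mul_smul_comm, ha.1], by rw [smul_mul_assoc, ha.2]⟩
  star_mem' ha := ⟨by rw [← he.star_eq, ← star_mul, ha.2], by rw [← he.star_eq, ← star_mul, ha.1]⟩

noncomputable def cutoff (ε : ℝ) (p : A) : A := cfcₙ (fun t : ℝ => min (t / ε) 1) p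

lemma isSelfAdjoint_cutoff (ε : ℝ) (p : A) : IsSelfAdjoint (cutoff ε p) := cfcₙ_predicate _ _

variable [PartialOrder A] [StarOrderedRing A]

namespace CPFinite

lemma smul {x : A} (hx : CPFinite x) {μ : ℝ} (hμ : 0 < μ) : CPFinite (μ • x) := by
  intro z y hzx hzy hyx
  set ν := √μ⁻¹
  have scale : ∀ a b : A, (ν • a) * (ν • b) = μ⁻¹ • (a * b) := fun a b => by
    rw [smul_mul_smul_comm, Real.mul_self_sqrt (by positivity)]
  have hx' : Tendsto (fun n => ∑ k ∈ range n, star (ν • z k) * (ν • z k)) atTop (𝓝 x) := by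
    simpa [star_smul, scale, ← smul_sum, smul_smul, hμ.ne'] using hzx.const_smul μ⁻¹
  have hy' : Tendsto (fun n => ∑ k ∈ range n, (ν • z k) * star (ν • z k)) atTop
      (𝓝 (μ⁻¹ • y)) := by
    simpa [star_smul, scale, ← smul_sum] using hzy.const_smul μ⁻¹
  have hyx' : μ⁻¹ • y ≤ x := by
    simpa [smul_smul, hμ.ne'] using smul_le_smul_of_nonneg_left hyx (inv_nonneg.2 hμ.le)
  rw [← hx _ _ hx' hy' hyx', smul_smul, mul_inv_cancel₀ hμ.ne', one_smul]

lemma of_le {x c : A} (hx : CPFinite x) (hcx : c ≤ x) : CPFinite c := by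
  intro z y hzc hzy hyc
  -- Prepend `√(x - c)` to `z`: both series gain the summand `x - c`.
  set r := CFC.sqrt (x - c)
  have hr : star r * r = x - c ∧ r * star r = x - c := by
    rw [(CFC.sqrt_nonneg (x - c)).isSelfAdjoint.star_eq,
      CFC.sqrt_mul_sqrt_self _ (sub_nonneg.2 hcx)]
    exact ⟨rfl, rfl⟩
  let w : ℕ → A := fun k => Nat.casesOn k r z
  have hwx : Tendsto (fun n => ∑ k ∈ range n, star (w k) * w k) atTop (𝓝 x) := by
    rw [← tendsto_add_atTop_iff_nat 1]
    simpa [w, sum_range_succ', hr.1] using hzc.add_const (x - c)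
  have hwy : Tendsto (fun n => ∑ k ∈ range n, w k * star (w k)) atTop
      (𝓝 (y + (x - c))) := by
    rw [← tendsto_add_atTop_iff_nat 1]
    simpa [w, sum_range_succ', hr.2] using hzy.add_const (x - c)
  have hyx : y + (x - c) ≤ c + (x - c) := add_le_add_left hyc (x - c)
  rw [add_sub_cancel] at hyx
  exact add_right_cancel ((hx w _ hwx hwy hyx).trans (add_sub_cancel c x).symm)

end CPFinite

lemma mul_eq_self_of_le_of_mul_eq_self {a b e : A} (he : IsSelfAdjoint e) (ha : 0 ≤ a)
    (hab : a ≤ b) (heb : e * b = b) (hbe : b * e = b) : a * e = a := by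
  -- With `u = √a (1 - e)` and `v = √(b - a) (1 - e)`, `u⋆u + v⋆v = (1 - e) b (1 - e) = 0`.
  set r := CFC.sqrt a
  set s := CFC.sqrt (b - a)
  have hr : star r = r := (CFC.sqrt_nonneg a).isSelfAdjoint.star_eq
  have hs : star s = s := (CFC.sqrt_nonneg (b - a)).isSelfAdjoint.star_eq
  have hrr : r * r = a := CFC.sqrt_mul_sqrt_self a ha
  have hss : s * s = b - a := CFC.sqrt_mul_sqrt_self _ (sub_nonneg.2 hab)
  set u := r - r * e
  set v := s - s * e
  have hsum : star u * u + star v * v = 0 := by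
    have : star u * u + star v * v = (r * r + s * s) - (r * r + s * s) * e
        - e * (r * r + s * s) + e * ((r * r + s * s) * e) := by
      simp only [u, v, star_sub, star_mul, hr, hs, he.star_eq]
      noncomm_ring
    rw [this, hrr, hss, add_sub_cancel, hbe, heb, sub_self, zero_sub, neg_add_cancel]
  have hu : u = 0 := by
    rw [← CStarRing.star_mul_self_eq_zero_iff]
    exact ((add_eq_zero_iff_of_nonneg (star_mul_self_nonneg u)
      (star_mul_self_nonneg v)).1 hsum).1
  have hre : r * e = r := (sub_eq_zero.1 hu).symm
  rw [← hrr, mul_assoc, hre]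

lemma isHereditarySubalgebra_cornerSubalgebra (e : A) (he : IsSelfAdjoint e) :
    IsHereditarySubalgebra (cornerSubalgebra e he) := by
  refine ⟨(isClosed_eq (by fun_prop) continuous_id).inter
    (isClosed_eq (by fun_prop) continuous_id), fun a b hb ha hab => ?_⟩
  have hae : a * e = a := mul_eq_self_of_le_of_mul_eq_self he ha hab hb.1 hb.2
  refine ⟨?_, hae⟩
  simpa [he.star_eq, ha.isSelfAdjoint.star_eq] using congrArg star hae

lemma le_norm_smul_mul_self_of_mem_cornerSubalgebra {e c : A} {he : IsSelfAdjoint e}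
    (hc : c ∈ cornerSubalgebra e he) (hc' : IsSelfAdjoint c) : c ≤ ‖c‖ • (e * e) := by
  simpa [he.star_eq, hc.1, hc.2] using CStarAlgebra.star_left_conjugate_le_norm_smul (a := e) hc'

lemma cornerSubalgebra_subset_of_mul_self_mem {B : NonUnitalStarSubalgebra ℂ A}
    (hB : IsHereditarySubalgebra B) {e : A} (he : IsSelfAdjoint e) (hee : e * e ∈ B) :
    (cornerSubalgebra e he : Set A) ⊆ B := by
  have conj_mem_of_nonneg {w : A} (hw : 0 ≤ w) : e * w * e ∈ B := by
    have hle := CStarAlgebra.star_left_conjugate_le_norm_smul (a := e) hw.isSelfAdjoint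
    rw [he.star_eq] at hle
    refine hB.2 ?_ (by simpa [he.star_eq] using star_left_conjugate_nonneg hw e) hle
    rw [← Complex.coe_smul]
    exact SMulMemClass.smul_mem _ hee
  have conj_mem (w : A) : e * w * e ∈ B := by
    have hw : w ∈ Submodule.span ℂ {a : A | 0 ≤ a} := by simp [CStarAlgebra.span_nonneg]
    induction hw using Submodule.span_induction with
    | mem w hw => exact conj_mem_of_nonneg hw
    | zero => simp
    | add w₁ w₂ _ _ h₁ h₂ => simpa [mul_add, add_mul] using add_mem h₁ h₂
    | smul c w _ h => simpa [mul_smul_comm, smul_mul_assoc] using SMulMemClass.smul_mem c h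
  intro z hz
  simpa [hz.1, hz.2] using conj_mem z

lemma cutoff_mul_self_le {p : A} (hp : 0 ≤ p) {ε : ℝ} (hε : 0 < ε) :
    cutoff ε p * cutoff ε p ≤ ε⁻¹ • p := by
  rw [cutoff, ← cfcₙ_mul _ _ p, ← cfcₙ_const_mul_id ε⁻¹ p]
  refine cfcₙ_mono fun t ht => ?_
  have ht0 : 0 ≤ t := quasispectrum_nonneg_of_nonneg p hp t ht
  calc min (t / ε) 1 * min (t / ε) 1 ≤ t / ε * 1 :=
        mul_le_mul (min_le_left _ _) (min_le_right _ _) (by positivity) (by positivity)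
    _ = ε⁻¹ * t := by ring

lemma exists_ne_zero_mem_cornerSubalgebra_cutoff {p : A} (hp : 0 ≤ p) {ε : ℝ} (hε : 0 < ε)
    (hεp : ε < ‖p‖) : ∃ a ∈ cornerSubalgebra (cutoff ε p) (isSelfAdjoint_cutoff ε p), a ≠ 0 := by
  have hcut (t : ℝ) : min (t / ε) 1 * max (t - ε) 0 = max (t - ε) 0 := by
    rcases le_or_gt t ε with ht | ht
    · rw [max_eq_right (by linarith), mul_zero]
    · rw [min_eq_right ((one_le_div₀ hε).2 ht.le), one_mul]
  -- `cfcₙ_mul` discharges its side goal `max (0 - ε) 0 = 0` from this hypothesis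
  have hε' : 0 ≤ ε := hε.le
  refine ⟨cfcₙ (fun t : ℝ => max (t - ε) 0) p, ⟨?_, ?_⟩, fun ha => ?_⟩
  · rw [cutoff, ← cfcₙ_mul _ _ p]
    exact cfcₙ_congr fun t _ => hcut t
  · rw [cutoff, ← cfcₙ_mul _ _ p]
    exact cfcₙ_congr fun t _ => (mul_comm _ _).trans (hcut t)
  -- `p - a = min(p, ε)` has norm at most `ε < ‖p‖`, so `a ≠ 0`.
  have hdiff : p - cfcₙ (fun t : ℝ => max (t - ε) 0) p = cfcₙ (fun t : ℝ => min t ε) p := by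
    nth_rewrite 1 [← cfcₙ_id' ℝ p]
    rw [← cfcₙ_sub _ _ p]
    exact cfcₙ_congr fun t _ => by rcases le_total t ε with h | h <;> simp [h]
  have hle : ‖p‖ ≤ ε := by
    rw [← sub_zero p, ← ha, hdiff]
    refine norm_cfcₙ_le fun t ht => ?_
    have ht0 : 0 ≤ t := quasispectrum_nonneg_of_nonneg p hp t ht
    rw [Real.norm_of_nonneg (le_min ht0 hε')]
    exact min_le_right t ε
  linarith

lemma exists_isHereditarySubalgebra_le_smul {p : A} (hp : 0 ≤ p) (hp0 : p ≠ 0) :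
    ∃ E : NonUnitalStarSubalgebra ℂ A, IsHereditarySubalgebra E ∧ (∃ a ∈ E, a ≠ 0) ∧
      (∀ c ∈ E, 0 ≤ c → ∃ μ : ℝ, 0 < μ ∧ c ≤ μ • p) ∧
      ∀ B : NonUnitalStarSubalgebra ℂ A, IsHereditarySubalgebra B → p ∈ B →
        (E : Set A) ⊆ B := by
  set ε := ‖p‖ / 2
  have hε : 0 < ε := by positivity
  set e := cutoff ε p
  have hee := cutoff_mul_self_le hp hε
  have hee0 : 0 ≤ e * e := (isSelfAdjoint_cutoff ε p).mul_self_nonneg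
  refine ⟨cornerSubalgebra e (isSelfAdjoint_cutoff ε p),
    isHereditarySubalgebra_cornerSubalgebra _ _,
    exists_ne_zero_mem_cornerSubalgebra_cutoff hp hε (half_lt_self (norm_pos_iff.2 hp0)),
    fun c hc hc0 => ⟨(‖c‖ + 1) * ε⁻¹, by positivity, ?_⟩, fun B hB hpB => ?_⟩
  · calc c ≤ ‖c‖ • (e * e) :=
          le_norm_smul_mul_self_of_mem_cornerSubalgebra hc hc0.isSelfAdjoint
      _ ≤ (‖c‖ + 1) • (e * e) := smul_le_smul_of_nonneg_right (by linarith) hee0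
      _ ≤ (‖c‖ + 1) • ε⁻¹ • p := smul_le_smul_of_nonneg_left hee (by positivity)
      _ = ((‖c‖ + 1) * ε⁻¹) • p := smul_smul _ _ _
  · refine cornerSubalgebra_subset_of_mul_self_mem hB _ (hB.2 ?_ hee0 hee)
    rw [← Complex.coe_smul]
    exact SMulMemClass.smul_mem _ hpB

lemma exists_nonneg_ne_zero_mem {S : NonUnitalStarSubalgebra ℂ A} (h : ∃ x ∈ S, x ≠ 0) :
    ∃ x ∈ S, 0 ≤ x ∧ x ≠ 0 := by
  obtain ⟨x, hx, hx0⟩ := h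
  exact ⟨star x * x, mul_mem (star_mem hx) hx, star_mul_self_nonneg x,
    (CStarRing.star_mul_self_ne_zero_iff x).2 hx0⟩

end

/-- A C*-algebra `A` is semi-finite (every nonzero positive element dominates a nonzero finite
positive element) if and only if every nonzero hereditary C*-subalgebra of `A` contains a
nonzero finite hereditary C*-subalgebra, i.e. a nonzero hereditary C*-subalgebra all of whose
positive elements are finite in `A`. -/
theorem semifinite_iff_hereditary_contains_finite_hereditary
    {A : Type*} [NonUnitalCStarAlgebra A] [PartialOrder A] [StarOrderedRing A] :
    (∀ x : A, 0 ≤ x → x ≠ 0 → ∃ y : A, 0 ≤ y ∧ y ≠ 0 ∧ y ≤ x ∧ CPFinite y) ↔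
    (∀ B : NonUnitalStarSubalgebra ℂ A, IsHereditarySubalgebra B → (∃ x ∈ B, x ≠ 0) →
      ∃ C : NonUnitalStarSubalgebra ℂ A, IsHereditarySubalgebra C ∧ (C : Set A) ⊆ (B : Set A) ∧
        (∃ x ∈ C, x ≠ 0) ∧ ∀ x ∈ C, 0 ≤ x → CPFinite x) := by
  constructor
  · intro hsemi B hB hB0
    obtain ⟨x, hxB, hx, hx0⟩ := exists_nonneg_ne_zero_mem hB0
    obtain ⟨y, hy, hy0, hyx, hyfin⟩ := hsemi x hx hx0
    obtain ⟨E, hE, hE0, hEy, hEsub⟩ := exists_isHereditarySubalgebra_le_smul hy hy0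
    refine ⟨E, hE, hEsub B hB (hB.2 hxB hy hyx), hE0, fun c hc hc0 => ?_⟩
    obtain ⟨μ, hμ, hcμ⟩ := hEy c hc hc0
    exact (hyfin.smul hμ).of_le hcμ
  · intro hher x hx hx0
    obtain ⟨E, hE, hE0, hEx, -⟩ := exists_isHereditarySubalgebra_le_smul hx hx0
    obtain ⟨C, hC, hCE, hC0, hCfin⟩ := hher E hE hE0
    obtain ⟨c, hcC, hc, hc0⟩ := exists_nonneg_ne_zero_mem hC0
    obtain ⟨μ, hμ, hcμ⟩ := hEx c (hCE hcC) hc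
    refine ⟨μ⁻¹ • c, smul_nonneg (by positivity) hc, smul_ne_zero (by positivity) hc0, ?_,
      (hCfin c hcC hc).smul (by positivity)⟩
    exact (inv_smul_le_iff_of_pos hμ).2 hcμ
end
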